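/- arXiv:2412.04970 — 2 statements merged into one kernel-verified Lean document; each statement's English description precedes it below -/
import Mathlib

section
/- Let (U, 𝒮) be a laminar set system, let S be a set of non-singleton members of 𝒮, and let (π, σ) and (π′, σ′) be two pairs of injections from S to U, each identifying S with unique request. If π(S) = π′(S) and σ(S) = σ′(S), then π = π′ and σ = σ′. -/
variable {α : Type*} [DecidableEq α] [Fintype α]

/-- A set system on the finite universe `α`: `∅ ∉ 𝒮`, `univ ∈ 𝒮`, all singletons in `𝒮`. -/
def IsSetSystem (𝒮 : Finset (Finset α)) : Prop :=
  (∅ : Finset α) ∉ 𝒮 ∧ Finset.univ ∈ 𝒮 ∧ ∀ a : α, ({a} : Finset α) ∈ 𝒮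

/-- Two sets overlap: non-disjoint and neither contains the other. -/
def Overlap (X Y : Finset α) : Prop :=
  (X ∩ Y).Nonempty ∧ ¬ X ⊆ Y ∧ ¬ Y ⊆ X

/-- A set system is laminar when no two members overlap. -/
def IsLaminar (𝒮 : Finset (Finset α)) : Prop :=
  ∀ X ∈ 𝒮, ∀ Y ∈ 𝒮, ¬ Overlap X Y

/-- `c` is a child of `x` in the laminar tree: a ⊆-maximal proper subset of `x` in `𝒮`. -/
def IsChild (𝒮 : Finset (Finset α)) (c x : Finset α) : Prop :=
  c ∈ 𝒮 ∧ c ⊂ x ∧ ∀ y ∈ 𝒮, y ⊂ x → c ⊆ y → y = c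

/-- `p` is the parent of `x`: the ⊆-minimal member of `𝒮` properly containing `x`. -/
def IsParent (𝒮 : Finset (Finset α)) (p x : Finset α) : Prop :=
  p ∈ 𝒮 ∧ x ⊂ p ∧ ∀ y ∈ 𝒮, x ⊂ y → p ⊆ y

/-- `(π, σ)` identifies `S`: a pair of injections on `S` such that each `s ∈ S` is the
⊆-minimal member of `𝒮` containing both `π s` and `σ s`. -/
def Identifies (𝒮 S : Finset (Finset α)) (π σ : Finset α → α) : Prop :=
  Set.InjOn π ↑S ∧ Set.InjOn σ ↑S ∧
  ∀ s ∈ S, π s ∈ s ∧ σ s ∈ s ∧ ∀ y ∈ 𝒮, π s ∈ y → σ s ∈ y → s ⊆ y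

/-- `x` is `s`-requested in `(π, σ)` (for `s ∈ S`): `x ⊆ s` and `π s ∈ x` or `σ s ∈ x`. -/
def Requested (S : Finset (Finset α)) (π σ : Finset α → α) (s x : Finset α) : Prop :=
  s ∈ S ∧ x ⊆ s ∧ (π s ∈ x ∨ σ s ∈ x)

/-- `(π, σ)` has unique request: every member of `𝒮` is `s`-requested for at most one `s ∈ S`. -/
def UniqueRequest (𝒮 S : Finset (Finset α)) (π σ : Finset α → α) : Prop :=
  ∀ x ∈ 𝒮, ∀ s s' : Finset α,
    Requested S π σ s x → Requested S π σ s' x → s = s'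

/-- The bi-colouring `(A, B)` (disjoint, equal cardinality) identifies `S`. -/
def BicolIdentifies (𝒮 S : Finset (Finset α)) (A B : Finset α) : Prop :=
  Disjoint A B ∧ A.card = B.card ∧
  ∃ π σ : Finset α → α, Identifies 𝒮 S π σ ∧ UniqueRequest 𝒮 S π σ ∧
    S.image π = A ∧ S.image σ = B

/-- `X` is a thin set of inner nodes: for every non-root `x ∈ X`, the parent of `x` is not
in `X` and `x` has a sibling not in `X`. -/
def Thin (𝒮 X : Finset (Finset α)) : Prop :=
  ∀ x ∈ X, x ≠ Finset.univ →
    (∀ p : Finset α, IsParent 𝒮 p x → p ∉ X) ∧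
    ∃ y p : Finset α, y ≠ x ∧ IsChild 𝒮 x p ∧ IsChild 𝒮 y p ∧ y ∉ X

/-! If `s` uses the point `a` in `(π, σ)` and `s'` uses it in `(π', σ')`, both contain `a`, so
laminarity makes them comparable, say `s' ⊆ s`; then `s'` is requested both by itself and by `s`
in `(π, σ)`, and unique request forces `s = s'`. Since the image sets agree, `π' s = π t` for some
`t ∈ S`, and this shared point gives `t = s`; likewise for `σ`. -/

theorem Finset.eqOn_of_image_eq {β γ : Type*} [DecidableEq β] {S : Finset γ} {f g : γ → β}
    (h : S.image f = S.image g) (hfg : ∀ t ∈ S, ∀ s ∈ S, f t = g s → t = s) :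
    ∀ s ∈ S, f s = g s := by
  intro s hs
  obtain ⟨t, ht, hts⟩ := Finset.mem_image.1 (h ▸ Finset.mem_image_of_mem g hs)
  rwa [hfg t ht s hs hts] at hts

section LaminarRequests

variable {β : Type*}

theorem IsLaminar.subset_or_subset [DecidableEq β] {𝒮 : Finset (Finset β)} (hlam : IsLaminar 𝒮)
    {X Y : Finset β} (hX : X ∈ 𝒮) (hY : Y ∈ 𝒮) {a : β} (haX : a ∈ X) (haY : a ∈ Y) :
    X ⊆ Y ∨ Y ⊆ X := by
  by_contra! h
  exact hlam X hX Y hY ⟨⟨a, Finset.mem_inter.2 ⟨haX, haY⟩⟩, h.1, h.2⟩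

variable {𝒮 S : Finset (Finset β)} {π σ : Finset β → β} {s : Finset β} {a : β}

theorem Identifies.mem_of_eq_or_eq (hid : Identifies 𝒮 S π σ) (hs : s ∈ S)
    (ha : π s = a ∨ σ s = a) : a ∈ s := by
  rcases ha with rfl | rfl
  exacts [(hid.2.2 s hs).1, (hid.2.2 s hs).2.1]

theorem Identifies.requested_self (hid : Identifies 𝒮 S π σ) (hs : s ∈ S) :
    Requested S π σ s s :=
  ⟨hs, subset_rfl, Or.inl (hid.2.2 s hs).1⟩

theorem UniqueRequest.eq_of_subset (hur : UniqueRequest 𝒮 S π σ) (hid : Identifies 𝒮 S π σ)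
    {s' : Finset β} (hs'𝒮 : s' ∈ 𝒮) (hs' : s' ∈ S) (hs : s ∈ S) (hsub : s' ⊆ s)
    (ha : π s = a ∨ σ s = a) (has' : a ∈ s') : s' = s := by
  refine hur s' hs'𝒮 s' s (hid.requested_self hs') ⟨hs, hsub, ?_⟩
  rcases ha with rfl | rfl
  exacts [Or.inl has', Or.inr has']

theorem eq_of_common_point_of_uniqueRequest [DecidableEq β] (hlam : IsLaminar 𝒮)
    (hS : ∀ x ∈ S, x ∈ 𝒮) {π' σ' : Finset β → β}
    (hid : Identifies 𝒮 S π σ) (hur : UniqueRequest 𝒮 S π σ)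
    (hid' : Identifies 𝒮 S π' σ') (hur' : UniqueRequest 𝒮 S π' σ')
    {s' : Finset β} (hs : s ∈ S) (hs' : s' ∈ S)
    (ha : π s = a ∨ σ s = a) (ha' : π' s' = a ∨ σ' s' = a) : s = s' := by
  have has := hid.mem_of_eq_or_eq hs ha
  have has' := hid'.mem_of_eq_or_eq hs' ha'
  rcases hlam.subset_or_subset (hS s hs) (hS s' hs') has has' with hsub | hsub
  · exact hur'.eq_of_subset hid' (hS s hs) hs hs' hsub ha' has
  · exact (hur.eq_of_subset hid (hS s' hs') hs' hs hsub ha has').symm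

end LaminarRequests

theorem stmt_6_general (𝒮 : Finset (Finset α)) (hlam : IsLaminar 𝒮)
    (S : Finset (Finset α)) (hS : ∀ x ∈ S, x ∈ 𝒮 ∧ ∀ a : α, x ≠ {a})
    (π σ π' σ' : Finset α → α)
    (hid : Identifies 𝒮 S π σ) (hur : UniqueRequest 𝒮 S π σ)
    (hid' : Identifies 𝒮 S π' σ') (hur' : UniqueRequest 𝒮 S π' σ')
    (hA : S.image π = S.image π') (hB : S.image σ = S.image σ') :
    ∀ s ∈ S, π s = π' s ∧ σ s = σ' s := by
  have hshared : ∀ t ∈ S, ∀ s ∈ S, ∀ a : α,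
      (π t = a ∨ σ t = a) → (π' s = a ∨ σ' s = a) → t = s := fun t ht s hs a =>
    eq_of_common_point_of_uniqueRequest hlam (fun x hx => (hS x hx).1) hid hur hid' hur' ht hs
  intro s hs
  exact ⟨Finset.eqOn_of_image_eq hA
      (fun t ht s hs h => hshared t ht s hs _ (.inl h) (.inl rfl)) s hs,
    Finset.eqOn_of_image_eq hB
      (fun t ht s hs h => hshared t ht s hs _ (.inr h) (.inr rfl)) s hs⟩

/-- Two pairs identifying `S` with unique request having the same image sets agree on `S`. -/
theorem stmt_6 (𝒮 : Finset (Finset α)) (hsys : IsSetSystem 𝒮) (hlam : IsLaminar 𝒮)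
    (S : Finset (Finset α)) (hS : ∀ x ∈ S, x ∈ 𝒮 ∧ ∀ a : α, x ≠ {a})
    (π σ π' σ' : Finset α → α)
    (hid : Identifies 𝒮 S π σ) (hur : UniqueRequest 𝒮 S π σ)
    (hid' : Identifies 𝒮 S π' σ') (hur' : UniqueRequest 𝒮 S π' σ')
    (hA : S.image π = S.image π') (hB : S.image σ = S.image σ') :
    ∀ s ∈ S, π s = π' s ∧ σ s = σ' s :=
  stmt_6_general 𝒮 hlam S hS π σ π' σ' hid hur hid' hur' hA hB
end

section
/- Let (U, 𝒮) be a laminar set system. Then there exists a family of four bi-colourings identifying the laminar tree; that is, there exist a partition (S₁, S₂, S₃, S₄) of the set of all non-singleton members of 𝒮 and bi-colourings (A₁, B₁), (A₂, B₂), (A₃, B₃), (A₄, B₄) such that for each i ∈ {1, 2, 3, 4} the bi-colouring (Aᵢ, Bᵢ) identifies Sᵢ. -/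
variable {α : Type*} [DecidableEq α] [Fintype α]

set_option linter.unusedSectionVars false
set_option linter.unusedVariables false
section Helpers

variable {𝒮 : Finset (Finset α)}

lemma mem_nonempty (hS : IsSetSystem 𝒮) {x : Finset α} (hx : x ∈ 𝒮) : x.Nonempty := by
  rcases Finset.eq_empty_or_nonempty x with h | h
  · subst h; exact absurd hx hS.1
  · exact h

lemma lam_subset (hL : IsLaminar 𝒮) {x y : Finset α} (hx : x ∈ 𝒮) (hy : y ∈ 𝒮)
    (h : (x ∩ y).Nonempty) : x ⊆ y ∨ y ⊆ x := by
  by_contra hc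
  push_neg at hc
  exact hL x hx y hy ⟨h, hc.1, hc.2⟩

lemma lam_subset' (hL : IsLaminar 𝒮) {x y : Finset α} (hx : x ∈ 𝒮) (hy : y ∈ 𝒮)
    {a : α} (hax : a ∈ x) (hay : a ∈ y) : x ⊆ y ∨ y ⊆ x :=
  lam_subset hL hx hy ⟨a, Finset.mem_inter.2 ⟨hax, hay⟩⟩

lemma inner_ssub (hS : IsSetSystem 𝒮) {x : Finset α} (hi : ∀ b : α, x ≠ {b})
    {a : α} (ha : a ∈ x) : ({a} : Finset α) ⊂ x := by
  refine ⟨Finset.singleton_subset_iff.2 ha, fun h => hi a ?_⟩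
  exact Finset.Subset.antisymm h (Finset.singleton_subset_iff.2 ha)

lemma exists_child (hS : IsSetSystem 𝒮) {x : Finset α} (hx : x ∈ 𝒮)
    (hi : ∀ b : α, x ≠ {b}) {a : α} (ha : a ∈ x) :
    ∃ c, IsChild 𝒮 c x ∧ a ∈ c := by
  classical
  set T := 𝒮.filter (fun y => a ∈ y ∧ y ⊂ x) with hT
  have hTne : T.Nonempty := ⟨{a}, by
    simp only [hT, Finset.mem_filter]
    exact ⟨hS.2.2 a, Finset.mem_singleton_self a, inner_ssub hS hi ha⟩⟩
  obtain ⟨c, hcT, hcmax⟩ := Finset.exists_max_image T Finset.card hTne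
  simp only [hT, Finset.mem_filter] at hcT
  refine ⟨c, ⟨hcT.1, hcT.2.2, ?_⟩, hcT.2.1⟩
  intro y hy hyx hcy
  refine (Finset.eq_of_subset_of_card_le hcy (hcmax y ?_)).symm
  simp only [hT, Finset.mem_filter]
  exact ⟨hy, hcy hcT.2.1, hyx⟩

lemma parent_of_child (hS : IsSetSystem 𝒮) (hL : IsLaminar 𝒮) {c x : Finset α}
    (hx : x ∈ 𝒮) (hc : IsChild 𝒮 c x) : IsParent 𝒮 x c := by
  obtain ⟨hcS, hcx, hmax⟩ := hc
  refine ⟨hx, hcx, fun y hy hcy => ?_⟩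
  have hcne : c.Nonempty := mem_nonempty hS hcS
  obtain ⟨a, ha⟩ := hcne
  rcases lam_subset' hL hy hx (hcy.1 ha) (hcx.1 ha) with h | h
  · rcases eq_or_ne y x with rfl | hne
    · exact subset_rfl
    · have := hmax y hy ⟨h, fun h' => hne (Finset.Subset.antisymm h h')⟩ hcy.1
      exact absurd (le_of_eq this) hcy.2
  · exact h

lemma parent_unique {p p' x : Finset α} (h : IsParent 𝒮 p x) (h' : IsParent 𝒮 p' x) : p = p' :=
  Finset.Subset.antisymm (h.2.2 p' h'.1 h'.2.1) (h'.2.2 p h.1 h.2.1)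

lemma exists_parent (hS : IsSetSystem 𝒮) (hL : IsLaminar 𝒮) {x : Finset α}
    (hx : x ∈ 𝒮) (hxu : x ≠ Finset.univ) : ∃ p, IsParent 𝒮 p x := by
  classical
  set T := 𝒮.filter (fun y => x ⊂ y) with hT
  have hTne : T.Nonempty := ⟨Finset.univ, by
    simp only [hT, Finset.mem_filter]
    exact ⟨hS.2.1, ⟨Finset.subset_univ x, fun h => hxu (Finset.Subset.antisymm (Finset.subset_univ x) h)⟩⟩⟩
  obtain ⟨p, hpT, hpmin⟩ := Finset.exists_min_image T Finset.card hTne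
  simp only [hT, Finset.mem_filter] at hpT
  refine ⟨p, hpT.1, hpT.2, fun y hy hxy => ?_⟩
  obtain ⟨a, ha⟩ := mem_nonempty hS hx
  rcases lam_subset' hL hpT.1 hy (hpT.2.1 ha) (hxy.1 ha) with h | h
  · exact h
  · have : y = p := Finset.eq_of_subset_of_card_le h (hpmin y (by
      simp only [hT, Finset.mem_filter]; exact ⟨hy, hxy⟩))
    exact le_of_eq this.symm

lemma children_disjoint (hS : IsSetSystem 𝒮) (hL : IsLaminar 𝒮) {c c' x : Finset α}
    (hc : IsChild 𝒮 c x) (hc' : IsChild 𝒮 c' x) (hne : c ≠ c') {a : α}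
    (ha : a ∈ c) (ha' : a ∈ c') : False := by
  rcases lam_subset' hL hc.1 hc'.1 ha ha' with h | h
  · exact hne (hc.2.2 c' hc'.1 hc'.2.1 h).symm
  · exact hne (hc'.2.2 c hc.1 hc.2.1 h)

lemma lev_child (hS : IsSetSystem 𝒮) (hL : IsLaminar 𝒮) {c x : Finset α}
    (hx : x ∈ 𝒮) (hc : IsChild 𝒮 c x) :
    (𝒮.filter (fun y => c ⊂ y)).card = (𝒮.filter (fun y => x ⊂ y)).card + 1 := by
  classical
  have hpar := parent_of_child hS hL hx hc
  have hset : 𝒮.filter (fun y => c ⊂ y) = insert x (𝒮.filter (fun y => x ⊂ y)) := by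
    ext y
    simp only [Finset.mem_filter, Finset.mem_insert]
    constructor
    · rintro ⟨hy, hcy⟩
      have hxy := hpar.2.2 y hy hcy
      rcases eq_or_ne y x with rfl | hne
      · exact Or.inl rfl
      · exact Or.inr ⟨hy, ⟨hxy, fun h => hne (Finset.Subset.antisymm h hxy)⟩⟩
    · rintro (rfl | ⟨hy, hxy⟩)
      · exact ⟨hx, hc.2.1⟩
      · exact ⟨hy, lt_trans hc.2.1 hxy⟩
  rw [hset, Finset.card_insert_of_notMem]
  simp only [Finset.mem_filter]
  rintro ⟨-, h⟩
  exact (lt_irrefl x h)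


lemma identify (hS : IsSetSystem 𝒮) (hL : IsLaminar 𝒮) (X : Finset (Finset α))
    (hXS : ∀ x ∈ X, x ∈ 𝒮) (hXi : ∀ x ∈ X, ∀ a : α, x ≠ {a})
    (hP1 : ∀ s ∈ X, ∀ c, IsChild 𝒮 c s → c ∉ X)
    (hP2 : ∀ x ∈ X, ∀ p ∈ 𝒮, IsChild 𝒮 x p → ∃ y, y ≠ x ∧ IsChild 𝒮 y p ∧ y ∉ X) :
    ∃ A B : Finset α, BicolIdentifies 𝒮 X A B := by
  classical
  have hAne : Nonempty α := by
    obtain ⟨a, -⟩ := mem_nonempty hS hS.2.1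
    exact ⟨a⟩
  -- Step A: every member not in X contains a point avoiding all X-members below it
  have ptA : ∀ n (c : Finset α), c.card ≤ n → c ∈ 𝒮 → c ∉ X →
      ∃ a ∈ c, ∀ x ∈ X, x ⊆ c → a ∉ x := by
    intro n
    induction n with
    | zero =>
      intro c hcard hc _
      obtain ⟨a, ha⟩ := mem_nonempty hS hc
      have := Finset.card_pos.2 ⟨a, ha⟩
      omega
    | succ n ih =>
      intro c hcard hc hcX
      by_cases hsing : ∃ b, c = {b}
      · obtain ⟨b, rfl⟩ := hsing
        refine ⟨b, Finset.mem_singleton_self b, fun x hxX hxc hbx => ?_⟩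
        have : x = {b} := Finset.Subset.antisymm hxc (Finset.singleton_subset_iff.2 hbx)
        exact hcX (this ▸ hxX)
      · push_neg at hsing
        obtain ⟨a0, ha0⟩ := mem_nonempty hS hc
        obtain ⟨c1, hc1, hac1⟩ := exists_child hS hc hsing ha0
        have hd' : ∃ d, IsChild 𝒮 d c ∧ d ∉ X := by
          by_cases h1 : c1 ∈ X
          · obtain ⟨y, hyne, hy, hyX⟩ := hP2 c1 h1 c hc hc1
            exact ⟨y, hy, hyX⟩
          · exact ⟨c1, hc1, h1⟩
        obtain ⟨d, hd, hdX⟩ := hd'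
        have hdcard : d.card ≤ n := by
          have := Finset.card_lt_card hd.2.1
          omega
        obtain ⟨a, had, hpt⟩ := ih d hdcard hd.1 hdX
        refine ⟨a, hd.2.1.1 had, fun x hxX hxc hax => ?_⟩
        rcases lam_subset' hL (hXS x hxX) hd.1 hax had with h | h
        · exact hpt x hxX h hax
        · rcases eq_or_ne x c with rfl | hne
          · exact hcX hxX
          · have : x = d :=
              hd.2.2 x (hXS x hxX) ⟨hxc, fun h' => hne (Finset.Subset.antisymm hxc h')⟩ h
            exact hdX (this ▸ hxX)
  have pt : ∀ c ∈ 𝒮, c ∉ X → ∃ a ∈ c, ∀ x ∈ X, x ⊆ c → a ∉ x :=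
    fun c hc hcX => ptA c.card c le_rfl hc hcX
  -- Step B: tokens for each member of X
  have stepB : ∀ s ∈ X, ∃ ab : α × α, ab.1 ∈ s ∧ ab.2 ∈ s ∧ ab.1 ≠ ab.2 ∧
      (∀ y ∈ 𝒮, ab.1 ∈ y → ab.2 ∈ y → s ⊆ y) ∧
      (∀ s' ∈ X, s' ⊂ s → ab.1 ∉ s' ∧ ab.2 ∉ s') := by
    intro s hsX
    have hsS := hXS s hsX
    have hsi := hXi s hsX
    obtain ⟨a0, ha0⟩ := mem_nonempty hS hsS
    obtain ⟨c1, hc1, hac1⟩ := exists_child hS hsS hsi ha0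
    obtain ⟨b0, hb0s, hb0c1⟩ := Finset.exists_of_ssubset hc1.2.1
    obtain ⟨c2, hc2, hbc2⟩ := exists_child hS hsS hsi hb0s
    have hc12 : c1 ≠ c2 := fun h => hb0c1 (h ▸ hbc2)
    have hc1X : c1 ∉ X := hP1 s hsX c1 hc1
    have hc2X : c2 ∉ X := hP1 s hsX c2 hc2
    obtain ⟨a, hac, hapt⟩ := pt c1 hc1.1 hc1X
    obtain ⟨b, hbc, hbpt⟩ := pt c2 hc2.1 hc2X
    have hdisj : ∀ u : α, u ∈ c1 → u ∈ c2 → False := fun u h1 h2 =>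
      children_disjoint hS hL hc1 hc2 hc12 h1 h2
    refine ⟨(a, b), hc1.2.1.1 hac, hc2.2.1.1 hbc, fun h => hdisj a hac ((show a = b from h) ▸ hbc), ?_, ?_⟩
    · intro y hy hay hby
      rcases lam_subset' hL hy hsS hay (hc1.2.1.1 hac) with h | h
      · rcases eq_or_ne y s with rfl | hne
        · exact subset_rfl
        · exfalso
          have hys : y ⊂ s := ⟨h, fun h' => hne (Finset.Subset.antisymm h h')⟩
          rcases lam_subset' hL hy hc1.1 hay hac with h2 | h2
          · exact hdisj b (h2 hby) hbc
          · have : y = c1 := hc1.2.2 y hy hys h2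
            exact hdisj b (this ▸ hby) hbc
      · exact h
    · intro s' hs'X hs's
      constructor
      · intro has'
        rcases lam_subset' hL (hXS s' hs'X) hc1.1 has' hac with h | h
        · exact hapt s' hs'X h has'
        · have : s' = c1 := hc1.2.2 s' (hXS s' hs'X) hs's h
          exact hc1X (this ▸ hs'X)
      · intro hbs'
        rcases lam_subset' hL (hXS s' hs'X) hc2.1 hbs' hbc with h | h
        · exact hbpt s' hs'X h hbs'
        · have : s' = c2 := hc2.2.2 s' (hXS s' hs'X) hs's h
          exact hc2X (this ▸ hs'X)
  choose! F hF using stepB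
  set π : Finset α → α := fun s => (F s).1 with hπdef
  set σ : Finset α → α := fun s => (F s).2 with hσdef
  have hπs : ∀ s ∈ X, π s ∈ s := fun s hs => (hF s hs).1
  have hσs : ∀ s ∈ X, σ s ∈ s := fun s hs => (hF s hs).2.1
  have hπσ : ∀ s ∈ X, π s ≠ σ s := fun s hs => (hF s hs).2.2.1
  have hmin : ∀ s ∈ X, ∀ y ∈ 𝒮, π s ∈ y → σ s ∈ y → s ⊆ y := fun s hs => (hF s hs).2.2.2.1
  have havoid : ∀ s ∈ X, ∀ s' ∈ X, s' ⊂ s → π s ∉ s' ∧ σ s ∉ s' :=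
    fun s hs => (hF s hs).2.2.2.2
  have key : ∀ s ∈ X, ∀ s' ∈ X, s ≠ s' → ∀ u v : α, (u = π s ∨ u = σ s) →
      (v = π s' ∨ v = σ s') → u ≠ v := by
    intro s hs s' hs' hne u v hu hv heq
    have hus : u ∈ s := by rcases hu with rfl | rfl; exacts [hπs s hs, hσs s hs]
    have hvs' : v ∈ s' := by rcases hv with rfl | rfl; exacts [hπs s' hs', hσs s' hs']
    subst heq
    rcases lam_subset' hL (hXS s hs) (hXS s' hs') hus hvs' with h | h
    · have hss' : s ⊂ s' := ⟨h, fun h' => hne (Finset.Subset.antisymm h h')⟩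
      have hav := havoid s' hs' s hs hss'
      rcases hv with rfl | rfl
      exacts [hav.1 hus, hav.2 hus]
    · have hss' : s' ⊂ s := ⟨h, fun h' => hne (Finset.Subset.antisymm h' h)⟩
      have hav := havoid s hs s' hs' hss'
      rcases hu with rfl | rfl
      exacts [hav.1 hvs', hav.2 hvs']
  have hinjπ : Set.InjOn π ↑X := by
    intro s hs s' hs' heq
    by_contra hne
    exact key s hs s' hs' hne _ _ (Or.inl rfl) (Or.inl rfl) heq
  have hinjσ : Set.InjOn σ ↑X := by
    intro s hs s' hs' heq
    by_contra hne
    exact key s hs s' hs' hne _ _ (Or.inr rfl) (Or.inr rfl) heq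
  refine ⟨X.image π, X.image σ, ?_, ?_, π, σ,
    ⟨hinjπ, hinjσ, fun s hs => ⟨hπs s hs, hσs s hs, hmin s hs⟩⟩, ?_, rfl, rfl⟩
  · rw [Finset.disjoint_left]
    rintro u hu hv
    obtain ⟨s, hs, rfl⟩ := Finset.mem_image.1 hu
    obtain ⟨s', hs', heq⟩ := Finset.mem_image.1 hv
    rcases eq_or_ne s s' with rfl | hne
    · exact hπσ s hs heq.symm
    · exact key s hs s' hs' hne _ _ (Or.inl rfl) (Or.inr rfl) heq.symm
  · rw [Finset.card_image_of_injOn hinjπ, Finset.card_image_of_injOn hinjσ]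
  · intro x hx s s' h1 h2
    obtain ⟨hs, hxs, htok⟩ := h1
    obtain ⟨hs', hxs', htok'⟩ := h2
    by_contra hne
    obtain ⟨w, hw⟩ := mem_nonempty hS hx
    rcases lam_subset' hL (hXS s hs) (hXS s' hs') (hxs hw) (hxs' hw) with h | h
    · have hss' : s ⊂ s' := ⟨h, fun h' => hne (Finset.Subset.antisymm h h')⟩
      have hav := havoid s' hs' s hs hss'
      rcases htok' with ht | ht
      exacts [hav.1 (hxs ht), hav.2 (hxs ht)]
    · have hss' : s' ⊂ s := ⟨h, fun h' => hne (Finset.Subset.antisymm h' h)⟩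
      have hav := havoid s hs s' hs' hss'
      rcases htok with ht | ht
      exacts [hav.1 (hxs' ht), hav.2 (hxs' ht)]

end Helpers

/-- There is a family of four bi-colourings identifying the laminar tree: a partition of
the inner nodes into four sets `S i`, each identified by a bi-colouring `(A i, B i)`. -/
theorem stmt_14 (𝒮 : Finset (Finset α)) (hsys : IsSetSystem 𝒮) (hlam : IsLaminar 𝒮) :
    ∃ (S : Fin 4 → Finset (Finset α)) (A B : Fin 4 → Finset α),
      (∀ i : Fin 4, ∀ x ∈ S i, x ∈ 𝒮 ∧ ∀ a : α, x ≠ {a}) ∧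
      (∀ i j : Fin 4, i ≠ j → Disjoint (S i) (S j)) ∧
      (∀ x ∈ 𝒮, (∀ a : α, x ≠ {a}) → ∃ i : Fin 4, x ∈ S i) ∧
      (∀ i : Fin 4, BicolIdentifies 𝒮 (S i) (A i) (B i)) := by
  classical
  set lev : Finset α → ℕ := fun x => (𝒮.filter (fun y => x ⊂ y)).card with hlevdef
  set idx : α → ℕ := fun a => ((Fintype.equivFin α) a : ℕ) with hidxdef
  have hidxinj : Function.Injective idx := by
    intro a b h
    exact (Fintype.equivFin α).injective (Fin.val_injective h)
  set bitP : Finset α → Prop :=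
    fun x => ∃ p a, IsParent 𝒮 p x ∧ a ∈ x ∧ ∀ b ∈ p, idx a ≤ idx b with hbitdef
  set cls : Finset α → Fin 4 := fun x =>
    if lev x % 2 = 0 then (if bitP x then 0 else 1) else (if bitP x then 2 else 3) with hclsdef
  have hparity : ∀ x y : Finset α, cls x = cls y → lev x % 2 = lev y % 2 := by
    intro x y h
    simp only [hclsdef] at h
    split_ifs at h <;> first | omega | exact absurd h (by decide)
  have hbitne : ∀ x y : Finset α, lev x % 2 = lev y % 2 → bitP x → ¬ bitP y →
      cls x ≠ cls y := by
    intro x y hpar bx hby h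
    simp only [hclsdef] at h
    split_ifs at h <;> first | exact absurd h (by decide) | omega | tauto
  have hlevc : ∀ x ∈ 𝒮, ∀ c, IsChild 𝒮 c x → lev c = lev x + 1 := by
    intro x hx c hc
    simpa only [hlevdef] using lev_child hsys hlam hx hc
  set S : Fin 4 → Finset (Finset α) :=
    fun i => 𝒮.filter (fun x => (∀ a : α, x ≠ {a}) ∧ cls x = i) with hSdef
  have hmemS : ∀ (i : Fin 4) (x : Finset α),
      x ∈ S i ↔ x ∈ 𝒮 ∧ (∀ a : α, x ≠ {a}) ∧ cls x = i := by
    intro i x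
    simp [hSdef]
  have hP1 : ∀ i : Fin 4, ∀ s ∈ S i, ∀ c, IsChild 𝒮 c s → c ∉ S i := by
    intro i s hs c hc hcS
    rw [hmemS] at hs hcS
    have hlc : lev c = lev s + 1 := hlevc s hs.1 c hc
    have := hparity c s (hcS.2.2.trans hs.2.2.symm)
    omega
  have hP2 : ∀ i : Fin 4, ∀ x ∈ S i, ∀ p ∈ 𝒮, IsChild 𝒮 x p →
      ∃ y, y ≠ x ∧ IsChild 𝒮 y p ∧ y ∉ S i := by
    intro i x hx p hp hchild
    rw [hmemS] at hx
    have hpne : p.Nonempty := mem_nonempty hsys hp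
    have hpi : ∀ a : α, p ≠ {a} := by
      intro a hpa
      have hxp := hchild.2.1
      rw [hpa] at hxp
      obtain ⟨u, hu⟩ := mem_nonempty hsys hx.1
      have hua : u = a := Finset.mem_singleton.1 (hxp.1 hu)
      subst hua
      exact hxp.2 (Finset.singleton_subset_iff.2 hu)
    obtain ⟨astar, hastar, hamin⟩ := Finset.exists_min_image p idx hpne
    have hparx : IsParent 𝒮 p x := parent_of_child hsys hlam hp hchild
    by_cases hax : astar ∈ x
    · obtain ⟨b0, hb0p, hb0x⟩ := Finset.exists_of_ssubset hchild.2.1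
      obtain ⟨y, hy, hby⟩ := exists_child hsys hp hpi hb0p
      have hyx : y ≠ x := fun h => hb0x (h ▸ hby)
      refine ⟨y, hyx, hy, ?_⟩
      intro hyS
      rw [hmemS] at hyS
      have hlevxy : lev y % 2 = lev x % 2 := by
        have h1 := hlevc p hp x hchild
        have h2 := hlevc p hp y hy
        omega
      have hbx : bitP x := ⟨p, astar, hparx, hax, hamin⟩
      have hnby : ¬ bitP y := by
        rintro ⟨p', a, hp', hay, hmin'⟩
        have hpy : IsParent 𝒮 p y := parent_of_child hsys hlam hp hy
        have hpp : p' = p := parent_unique hp' hpy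
        subst hpp
        have haa : a = astar :=
          hidxinj (le_antisymm (hmin' astar hastar) (hamin a (hy.2.1.1 hay)))
        subst haa
        exact children_disjoint hsys hlam hy hchild hyx hay hax
      exact hbitne x y hlevxy.symm hbx hnby (hx.2.2.trans hyS.2.2.symm)
    · obtain ⟨y, hy, hay⟩ := exists_child hsys hp hpi hastar
      have hyx : y ≠ x := fun h => hax (h ▸ hay)
      refine ⟨y, hyx, hy, ?_⟩
      intro hyS
      rw [hmemS] at hyS
      have hlevxy : lev y % 2 = lev x % 2 := by
        have h1 := hlevc p hp x hchild
        have h2 := hlevc p hp y hy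
        omega
      have hpy : IsParent 𝒮 p y := parent_of_child hsys hlam hp hy
      have hby : bitP y := ⟨p, astar, hpy, hay, hamin⟩
      have hnbx : ¬ bitP x := by
        rintro ⟨p', a, hp', haxm, hmin'⟩
        have hpp : p' = p := parent_unique hp' hparx
        subst hpp
        have haa : a = astar :=
          hidxinj (le_antisymm (hmin' astar hastar) (hamin a (hchild.2.1.1 haxm)))
        subst haa
        exact hax haxm
      exact hbitne y x hlevxy hby hnbx (hyS.2.2.trans hx.2.2.symm)
  have hid : ∀ i : Fin 4, ∃ A B : Finset α, BicolIdentifies 𝒮 (S i) A B := by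
    intro i
    refine identify hsys hlam (S i) ?_ ?_ (hP1 i) (hP2 i)
    · intro x hx
      exact ((hmemS i x).1 hx).1
    · intro x hx
      exact ((hmemS i x).1 hx).2.1
  choose A B hAB using hid
  refine ⟨S, A, B, ?_, ?_, ?_, hAB⟩
  · intro i x hx
    rw [hmemS] at hx
    exact ⟨hx.1, hx.2.1⟩
  · intro i j hij
    rw [Finset.disjoint_left]
    intro x hxi hxj
    rw [hmemS] at hxi hxj
    exact hij (hxi.2.2.symm.trans hxj.2.2)
  · intro x hx hxi
    exact ⟨cls x, (hmemS _ x).2 ⟨hx, hxi, rfl⟩⟩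
end
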